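/- arXiv:2205.08182 — 2 statements merged into one kernel-verified Lean document; each statement's English description precedes it below -/
import Mathlib

section
/- Let A be an n×n real matrix that is Hurwitz, i.e., every eigenvalue μ ∈ ℂ of A (viewed as a complex matrix) satisfies Re μ < 0. Then there exists a symmetric positive definite real n×n matrix Q satisfying the Lyapunov equation Q A + Aᵀ Q = −I, where I is the n×n identity matrix. -/
open Filter Topology Matrix MeasureTheory NormedSpace Set
open scoped NNReal

attribute [local instance] Matrix.linftyOpNormedRing Matrix.linftyOpNormedAlgebra

variable {n : ℕ}

noncomputable instance matrixContinuousENormReal : ContinuousENorm (Matrix (Fin n) (Fin n) ℝ) :=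
  SeminormedAddGroup.toContinuousENorm

instance matrixPseudoMetrizableReal :
    TopologicalSpace.PseudoMetrizableSpace (Matrix (Fin n) (Fin n) ℝ) :=
  inferInstanceAs (TopologicalSpace.PseudoMetrizableSpace (Fin n → Fin n → ℝ))

lemma mulVecLin_pow_apply (N : Matrix (Fin n) (Fin n) ℂ) (k : ℕ) (x : Fin n → ℂ) :
    (N.mulVecLin ^ k) x = (N ^ k) *ᵥ x := by
  induction k generalizing x with
  | zero => simp
  | succ k ih =>
    rw [pow_succ, pow_succ, Module.End.mul_apply, Matrix.mulVecLin_apply, ih,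
      Matrix.mulVec_mulVec]

lemma mulVecLin_sub_smul_pow (B : Matrix (Fin n) (Fin n) ℂ) (μ : ℂ) (k : ℕ) (x : Fin n → ℂ) :
    ((B.mulVecLin - μ • (1 : Module.End ℂ (Fin n → ℂ))) ^ k) x
      = ((B - μ • 1) ^ k) *ᵥ x := by
  have h : B.mulVecLin - μ • (1 : Module.End ℂ (Fin n → ℂ))
      = (B - μ • (1 : Matrix (Fin n) (Fin n) ℂ)).mulVecLin := by
    apply LinearMap.ext
    intro v
    funext i
    simp [Matrix.sub_mulVec, Matrix.smul_mulVec, Matrix.one_mulVec]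
  rw [h, mulVecLin_pow_apply]

/-- mulVec at a fixed vector, as a continuous linear map in the matrix. -/
noncomputable def mulVecCLM (v : Fin n → ℂ) : Matrix (Fin n) (Fin n) ℂ →L[ℂ] (Fin n → ℂ) :=
  LinearMap.toContinuousLinearMap
    { toFun := fun M => M *ᵥ v
      map_add' := fun M N => Matrix.add_mulVec M N v
      map_smul' := fun c M => Matrix.smul_mulVec c M v }

lemma exp_mulVec_eq (B : Matrix (Fin n) (Fin n) ℂ) (μ : ℂ) (m : ℕ) (v : Fin n → ℂ)
    (hv : ((B - μ • 1) ^ m) *ᵥ v = 0) (t : ℝ) :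
    exp ((t : ℂ) • B) *ᵥ v = ∑ j ∈ Finset.range m,
      (Complex.exp (t * μ) * ((t : ℂ) ^ j * ((j.factorial : ℂ))⁻¹)) •
        (((B - μ • 1) ^ j) *ᵥ v) := by
  set N := B - μ • (1 : Matrix (Fin n) (Fin n) ℂ) with hN
  have hsplit : (t : ℂ) • B = ((t : ℂ) * μ) • (1 : Matrix (Fin n) (Fin n) ℂ) + (t : ℂ) • N := by
    rw [hN, smul_sub, smul_smul]; abel
  have hcomm : Commute (((t : ℂ) * μ) • (1 : Matrix (Fin n) (Fin n) ℂ)) ((t : ℂ) • N) :=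
    ((Commute.one_left N).smul_left _).smul_right _
  have hscalar : exp (((t : ℂ) * μ) • (1 : Matrix (Fin n) (Fin n) ℂ))
      = Complex.exp (t * μ) • 1 := by
    rw [← Algebra.algebraMap_eq_smul_one, ← Algebra.algebraMap_eq_smul_one, Complex.exp_eq_exp_ℂ]
    exact (algebraMap_exp_comm _).symm
  have hterm : ∀ k : ℕ, mulVecCLM v ((k.factorial : ℂ)⁻¹ • ((t : ℂ) • N) ^ k)
      = ((t : ℂ) ^ k * (k.factorial : ℂ)⁻¹) • ((N ^ k) *ᵥ v) := by
    intro k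
    rw [_root_.map_smul, smul_pow, _root_.map_smul]
    simp [mulVecCLM, smul_smul, mul_comm]
  have hzero : ∀ k ∉ Finset.range m,
      ((t : ℂ) ^ k * (k.factorial : ℂ)⁻¹) • ((N ^ k) *ᵥ v) = 0 := by
    intro k hk
    rw [Finset.mem_range, not_lt] at hk
    have : N ^ k = N ^ (k - m) * N ^ m := by
      rw [← pow_add, Nat.sub_add_cancel hk]
    rw [this, ← Matrix.mulVec_mulVec, hv, Matrix.mulVec_zero, smul_zero]
  have hexpN : exp ((t : ℂ) • N) *ᵥ v = ∑ j ∈ Finset.range m,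
      ((t : ℂ) ^ j * (j.factorial : ℂ)⁻¹) • ((N ^ j) *ᵥ v) := by
    have h1 : exp ((t : ℂ) • N) *ᵥ v = mulVecCLM v (exp ((t : ℂ) • N)) := rfl
    rw [h1, exp_eq_tsum ℂ]; beta_reduce; refine (ContinuousLinearMap.map_tsum (mulVecCLM v) (expSeries_summable' ((t : ℂ) • N))).trans ?_
    rw [tsum_congr hterm, tsum_eq_sum hzero]
  calc exp ((t : ℂ) • B) *ᵥ v
      = (Complex.exp (t * μ) • (1 : Matrix (Fin n) (Fin n) ℂ) * exp ((t : ℂ) • N)) *ᵥ v := by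
        rw [hsplit, Matrix.exp_add_of_commute _ _ hcomm, hscalar]
    _ = Complex.exp (t * μ) • (exp ((t : ℂ) • N) *ᵥ v) := by
        rw [smul_mul_assoc, one_mul, Matrix.smul_mulVec]
    _ = _ := by
        rw [hexpN, Finset.smul_sum]
        refine Finset.sum_congr rfl fun j _ => ?_
        rw [smul_smul]

lemma coeff_tendsto {μ : ℂ} (hμ : μ.re < 0) (j : ℕ) :
    Tendsto (fun t : ℝ => Complex.exp (t * μ) * (t : ℂ) ^ j) atTop (𝓝 0) := by
  rw [tendsto_zero_iff_norm_tendsto_zero]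
  have key : Tendsto (fun t : ℝ => t ^ j * Real.exp (μ.re * t)) atTop (𝓝 0) := by
    have h1 : Tendsto (fun t : ℝ => -μ.re * t) atTop atTop :=
      Tendsto.const_mul_atTop (by linarith) tendsto_id
    have h2 := (Real.tendsto_pow_mul_exp_neg_atTop_nhds_zero j).comp h1
    have h3 : Tendsto (fun t : ℝ => (-μ.re)⁻¹ ^ j * ((-μ.re * t) ^ j * Real.exp (-(-μ.re * t))))
        atTop (𝓝 ((-μ.re)⁻¹ ^ j * 0)) := h2.const_mul _
    rw [mul_zero] at h3
    refine h3.congr fun t => ?_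
    have hre : μ.re ≠ 0 := by linarith
    rw [mul_pow, neg_mul, neg_neg]
    rw [← mul_assoc, ← mul_assoc, ← mul_pow]
    rw [inv_mul_cancel₀ (by simpa using hre : -μ.re ≠ 0), one_pow, one_mul]
  have heq : ∀ᶠ t : ℝ in atTop, ‖Complex.exp (t * μ) * (t : ℂ) ^ j‖
      = t ^ j * Real.exp (μ.re * t) := by
    filter_upwards [eventually_ge_atTop (0:ℝ)] with t ht
    rw [norm_mul, Complex.norm_exp, norm_pow, Complex.norm_real,
      Real.norm_of_nonneg ht]
    simp [mul_comm]
  exact key.congr' (heq.mono fun t ht => ht.symm)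

lemma decay_vec (B : Matrix (Fin n) (Fin n) ℂ)
    (h : ∀ μ : ℂ, (∃ v : Fin n → ℂ, v ≠ 0 ∧ B.mulVec v = μ • v) → μ.re < 0)
    (v : Fin n → ℂ) :
    Tendsto (fun t : ℝ => exp ((t : ℂ) • B) *ᵥ v) atTop (𝓝 0) := by
  set f : Module.End ℂ (Fin n → ℂ) := B.mulVecLin with hf
  let S : Submodule ℂ (Fin n → ℂ) :=
    { carrier := {w | Tendsto (fun t : ℝ => exp ((t : ℂ) • B) *ᵥ w) atTop (𝓝 0)}
      add_mem' := fun {a b} ha hb => by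
        have := ha.add hb
        rw [add_zero] at this
        simpa [Matrix.mulVec_add] using this
      zero_mem' := by simpa [Matrix.mulVec_zero] using tendsto_const_nhds
      smul_mem' := fun c {x} hx => by
        have := hx.const_smul c
        rw [smul_zero] at this
        simpa [Matrix.mulVec_smul] using this }
  have hS : ∀ μ : ℂ, f.maxGenEigenspace μ ≤ S := by
    intro μ
    by_cases hbot : f.maxGenEigenspace μ = ⊥
    · rw [hbot]; exact bot_le
    · have hev : f.HasEigenvalue μ := by
        obtain ⟨x, hx, hx0⟩ := Submodule.exists_mem_ne_zero_of_ne_bot hbot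
        obtain ⟨k, hk⟩ := (Module.End.mem_maxGenEigenspace f μ x).mp hx
        have hk0 : k ≠ 0 := by
          rintro rfl
          simp at hk
          exact hx0 hk
        apply Module.End.hasEigenvalue_of_hasGenEigenvalue (k := k)
        rw [Module.End.HasGenEigenvalue, Module.End.HasUnifEigenvalue]
        rw [Submodule.ne_bot_iff]
        refine ⟨x, ?_, hx0⟩
        rw [Module.End.mem_genEigenspace_nat, LinearMap.mem_ker]
        exact hk
      have hμ : μ.re < 0 := by
        apply h
        obtain ⟨w, hw⟩ := hev.exists_hasEigenvector
        exact ⟨w, hw.2, by simpa [hf, Matrix.mulVecLin_apply] using hw.apply_eq_smul⟩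
      intro x hx
      obtain ⟨k, hk⟩ := (Module.End.mem_maxGenEigenspace f μ x).mp hx
      rw [mulVecLin_sub_smul_pow] at hk
      show Tendsto _ atTop (𝓝 0)
      have hkey : ∀ t : ℝ, exp ((t : ℂ) • B) *ᵥ x = ∑ j ∈ Finset.range k,
          (Complex.exp (t * μ) * ((t : ℂ) ^ j * ((j.factorial : ℂ))⁻¹)) •
            (((B - μ • 1) ^ j) *ᵥ x) := exp_mulVec_eq B μ k x hk
      simp only [hkey]
      have : Tendsto (fun t : ℝ => ∑ j ∈ Finset.range k,
          (Complex.exp (t * μ) * ((t : ℂ) ^ j * ((j.factorial : ℂ))⁻¹)) •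
            (((B - μ • 1) ^ j) *ᵥ x)) atTop (𝓝 (∑ j ∈ Finset.range k, (0 : Fin n → ℂ))) := by
        apply tendsto_finset_sum
        intro j _
        have hc : Tendsto (fun t : ℝ => Complex.exp (t * μ) * ((t : ℂ) ^ j * ((j.factorial : ℂ))⁻¹))
            atTop (𝓝 0) := by
          have := (coeff_tendsto hμ j).mul_const ((j.factorial : ℂ))⁻¹
          rw [zero_mul] at this
          refine this.congr fun t => by ring
        simpa using hc.smul_const (((B - μ • 1) ^ j) *ᵥ x)
      simpa using this
  have hv : v ∈ S := by
    have htop := Module.End.iSup_maxGenEigenspace_eq_top f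
    have : (⊤ : Submodule ℂ (Fin n → ℂ)) ≤ S := by
      rw [← htop]
      exact iSup_le hS
    exact this trivial
  exact hv

lemma decay_matrix (B : Matrix (Fin n) (Fin n) ℂ)
    (h : ∀ μ : ℂ, (∃ v : Fin n → ℂ, v ≠ 0 ∧ B.mulVec v = μ • v) → μ.re < 0) :
    Tendsto (fun t : ℝ => exp ((t : ℂ) • B)) atTop (𝓝 0) := by
  refine tendsto_pi_nhds.mpr ?_
  intro i
  rw [tendsto_pi_nhds]
  intro j
  have hv := decay_vec B h (Pi.single j 1)
  have := (continuous_apply i).continuousAt.tendsto.comp hv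
  simp only [Function.comp_def] at this
  have heq : ∀ t : ℝ, (exp ((t : ℂ) • B) *ᵥ Pi.single j 1) i = exp ((t : ℂ) • B) i j := by
    intro t
    rw [Matrix.mulVec_single]
    simp
  simp only [heq] at this
  simpa using this

lemma decay_norm (B : Matrix (Fin n) (Fin n) ℂ)
    (h : ∀ μ : ℂ, (∃ v : Fin n → ℂ, v ≠ 0 ∧ B.mulVec v = μ • v) → μ.re < 0) :
    Tendsto (fun t : ℝ => ‖exp ((t : ℂ) • B)‖) atTop (𝓝 0) := by
  have := (decay_matrix B h).norm
  simpa using this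

lemma exp_coe_add_smul (B : Matrix (Fin n) (Fin n) ℂ) (a b : ℝ) :
    exp (((a + b : ℝ) : ℂ) • B) = exp ((a : ℂ) • B) * exp ((b : ℂ) • B) := by
  rw [show (((a + b : ℝ)) : ℂ) • B = (a : ℂ) • B + (b : ℂ) • B by push_cast; rw [add_smul]]
  exact exp_add_of_commute (((Commute.refl B).smul_left _).smul_right _)

lemma norm_one_le_one : ‖(1 : Matrix (Fin n) (Fin n) ℂ)‖ ≤ 1 := by
  rw [← Matrix.diagonal_one, Matrix.linfty_opNorm_diagonal]
  rw [pi_norm_le_iff_of_nonneg zero_le_one]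
  intro i
  simp

lemma decay_exp_bound (B : Matrix (Fin n) (Fin n) ℂ)
    (h : ∀ μ : ℂ, (∃ v : Fin n → ℂ, v ≠ 0 ∧ B.mulVec v = μ • v) → μ.re < 0) :
    ∃ C > 0, ∃ ε > 0, ∀ t : ℝ, 0 ≤ t → ‖exp ((t : ℂ) • B)‖ ≤ C * Real.exp (-ε * t) := by
  have h2 : ∀ᶠ t : ℝ in atTop, ‖exp ((t : ℂ) • B)‖ < 1/2 :=
    (decay_norm B h).eventually_lt_const (by norm_num)
  obtain ⟨t₀, hhalf, ht₀1⟩ := (h2.and (eventually_ge_atTop (1:ℝ))).exists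
  have ht₀0 : 0 < t₀ := lt_of_lt_of_le one_pos ht₀1
  have hcont : ContinuousOn (fun s : ℝ => ‖exp ((s : ℂ) • B)‖) (Icc 0 t₀) :=
    (Continuous.norm (exp_continuous.comp
      ((Complex.continuous_ofReal).smul continuous_const))).continuousOn
  obtain ⟨M, hM⟩ := (isCompact_Icc (a := (0:ℝ)) (b := t₀)).exists_bound_of_continuousOn hcont
  have hM' : ∀ s ∈ Icc (0:ℝ) t₀, ‖exp ((s : ℂ) • B)‖ ≤ M := by
    intro s hs
    have := hM s hs
    rw [Real.norm_eq_abs] at this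
    exact (le_abs_self _).trans this
  have hM0 : 0 < M + 1 := by
    have h1 := hM' 0 ⟨le_refl 0, le_of_lt ht₀0⟩
    have h0 : (0:ℝ) ≤ ‖exp (((0:ℝ) : ℂ) • B)‖ := norm_nonneg _
    linarith
  set ε := Real.log 2 / t₀ with hε
  have hε0 : 0 < ε := div_pos (Real.log_pos one_lt_two) ht₀0
  refine ⟨2 * (M + 1), by positivity, ε, hε0, ?_⟩
  intro t ht
  set k := ⌊t / t₀⌋₊ with hk
  have hs_nonneg : 0 ≤ t - k * t₀ := by
    rw [sub_nonneg]
    calc (k : ℝ) * t₀ ≤ (t / t₀) * t₀ :=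
          mul_le_mul_of_nonneg_right (Nat.floor_le (by positivity)) (le_of_lt ht₀0)
      _ = t := div_mul_cancel₀ t (ne_of_gt ht₀0)
  have hs_le : t - k * t₀ ≤ t₀ := by
    rw [sub_le_iff_le_add]
    calc t = (t / t₀) * t₀ := (div_mul_cancel₀ t (ne_of_gt ht₀0)).symm
      _ ≤ (k + 1) * t₀ :=
          mul_le_mul_of_nonneg_right (le_of_lt (Nat.lt_floor_add_one _)) (le_of_lt ht₀0)
      _ = t₀ + k * t₀ := by ring
  have hdecomp : exp ((t : ℂ) • B)
      = exp (((k * t₀ : ℝ) : ℂ) • B) * exp (((t - k * t₀ : ℝ) : ℂ) • B) := by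
    rw [← exp_coe_add_smul]
    norm_num
  have hpow : exp (((k * t₀ : ℝ) : ℂ) • B) = exp ((t₀ : ℂ) • B) ^ k := by
    rw [← Matrix.exp_nsmul]
    rw [← Nat.cast_smul_eq_nsmul ℂ k ((t₀:ℂ) • B), smul_smul]
    norm_num
  have hb1 : ‖exp ((t₀ : ℂ) • B) ^ k‖ ≤ (1/2) ^ k := by
    cases k with
    | zero => rw [pow_zero, pow_zero]; exact norm_one_le_one
    | succ m =>
      calc ‖exp ((t₀ : ℂ) • B) ^ (m+1)‖ ≤ ‖exp ((t₀ : ℂ) • B)‖ ^ (m+1) :=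
            norm_pow_le' _ (Nat.succ_pos m)
        _ ≤ (1/2) ^ (m+1) := pow_le_pow_left₀ (norm_nonneg _) (le_of_lt hhalf) _
  have hhalfk : ((1:ℝ)/2) ^ k ≤ 2 * Real.exp (-ε * t) := by
    have hlog : (0:ℝ) < Real.log 2 := Real.log_pos one_lt_two
    have hkey : -((k:ℝ) * Real.log 2) ≤ Real.log 2 + -ε * t := by
      have htk : t / t₀ ≤ (k:ℝ) + 1 := le_of_lt (Nat.lt_floor_add_one _)
      have e1 : ε * t = Real.log 2 * (t / t₀) := by rw [hε]; ring
      have e2 : Real.log 2 * (t / t₀) ≤ Real.log 2 * ((k:ℝ) + 1) :=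
        mul_le_mul_of_nonneg_left htk (le_of_lt hlog)
      nlinarith
    calc ((1:ℝ)/2) ^ k = Real.exp (-((k:ℝ) * Real.log 2)) := by
          rw [Real.exp_neg, Real.exp_nat_mul, Real.exp_log two_pos]
          rw [one_div, inv_pow]
      _ ≤ Real.exp (Real.log 2 + -ε * t) := Real.exp_le_exp.mpr hkey
      _ = 2 * Real.exp (-ε * t) := by rw [Real.exp_add, Real.exp_log two_pos]
  calc ‖exp ((t : ℂ) • B)‖
      ≤ ‖exp (((k * t₀ : ℝ) : ℂ) • B)‖ * ‖exp (((t - k * t₀ : ℝ) : ℂ) • B)‖ := by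
        rw [hdecomp]; exact norm_mul_le _ _
    _ ≤ (1/2) ^ k * (M + 1) := by
        apply mul_le_mul _ _ (norm_nonneg _) (by positivity)
        · rw [hpow]; exact hb1
        · exact le_trans (hM' _ ⟨hs_nonneg, hs_le⟩) (by linarith)
    _ ≤ (2 * Real.exp (-ε * t)) * (M + 1) :=
        mul_le_mul_of_nonneg_right hhalfk (by linarith)
    _ = 2 * (M + 1) * Real.exp (-ε * t) := by ring

lemma norm_map_ofReal (M : Matrix (Fin n) (Fin n) ℝ) :
    ‖M.map (Complex.ofReal)‖ = ‖M‖ := by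
  rw [Matrix.linfty_opNorm_def, Matrix.linfty_opNorm_def]
  congr 1
  apply Finset.sup_congr rfl
  intro i _
  apply Finset.sum_congr rfl
  intro j _
  simp [Matrix.map_apply]

lemma exp_map_ofReal (A : Matrix (Fin n) (Fin n) ℝ) (t : ℝ) :
    (exp (t • A)).map (Complex.ofReal) = exp ((t : ℂ) • A.map Complex.ofReal) := by
  have h1 : (exp (t • A)).map (Complex.ofReal)
      = Complex.ofRealHom.mapMatrix (exp (t • A)) := rfl
  rw [h1]
  refine (map_exp (Complex.ofRealHom.mapMatrix (m := Fin n))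
    (Continuous.matrix_map continuous_id Complex.continuous_ofReal) (t • A)).trans ?_
  have h2 : Complex.ofRealHom.mapMatrix (t • A) = (t : ℂ) • A.map Complex.ofReal := by
    ext i j
    simp [RingHom.mapMatrix_apply, Matrix.map_apply]
  rw [h2]
  rfl

lemma nnnorm_entry_le (M : Matrix (Fin n) (Fin n) ℝ) (i j : Fin n) : ‖M i j‖₊ ≤ ‖M‖₊ := by
  rw [Matrix.linfty_opNNNorm_def]
  refine le_trans ?_ (Finset.le_sup (Finset.mem_univ i))
  exact Finset.single_le_sum (f := fun k => ‖M i k‖₊) (fun k _ => zero_le) (Finset.mem_univ j)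

lemma norm_transpose_le (M : Matrix (Fin n) (Fin n) ℝ) : ‖Mᵀ‖ ≤ n * ‖M‖ := by
  have hnn : ‖Mᵀ‖₊ ≤ n * ‖M‖₊ := by
    rw [Matrix.linfty_opNNNorm_def (A := Mᵀ)]
    apply Finset.sup_le
    intro i _
    calc (∑ j : Fin n, ‖Mᵀ i j‖₊) ≤ ∑ _j : Fin n, ‖M‖₊ :=
          Finset.sum_le_sum fun j _ => nnnorm_entry_le M j i
      _ = n * ‖M‖₊ := by simp [Finset.sum_const, mul_comm]
  calc ‖Mᵀ‖ = ((‖Mᵀ‖₊ : ℝ≥0) : ℝ) := rfl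
    _ ≤ ((n * ‖M‖₊ : ℝ≥0) : ℝ) := by exact_mod_cast hnn
    _ = n * ‖M‖ := by push_cast; rfl

noncomputable def transposeCLM :
    Matrix (Fin n) (Fin n) ℝ →L[ℝ] Matrix (Fin n) (Fin n) ℝ :=
  LinearMap.toContinuousLinearMap
    { toFun := fun M => Mᵀ
      map_add' := fun M N => Matrix.transpose_add M N
      map_smul' := fun c M => Matrix.transpose_smul c M }

noncomputable def quadCLM (x : Fin n → ℝ) : Matrix (Fin n) (Fin n) ℝ →L[ℝ] ℝ :=
  LinearMap.toContinuousLinearMap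
    { toFun := fun M => x ⬝ᵥ (M *ᵥ x)
      map_add' := fun M N => by simp [Matrix.add_mulVec, dotProduct_add]
      map_smul' := fun c M => by simp [Matrix.smul_mulVec, dotProduct_smul] }

theorem lyapunov_equation_solvable_of_hurwitz'
    (A : Matrix (Fin n) (Fin n) ℝ)
    (hHurwitz : ∀ μ : ℂ,
      (∃ v : Fin n → ℂ, v ≠ 0 ∧ (A.map Complex.ofReal).mulVec v = μ • v) → μ.re < 0) :
    ∃ Q : Matrix (Fin n) (Fin n) ℝ,
      Q.IsSymm ∧ Q.PosDef ∧ Q * A + A.transpose * Q = -(1 : Matrix (Fin n) (Fin n) ℝ) := by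
  obtain ⟨C, hC, ε, hε, hbound⟩ := decay_exp_bound (A.map Complex.ofReal) hHurwitz
  have hA : ∀ t : ℝ, 0 ≤ t → ‖exp (t • A)‖ ≤ C * Real.exp (-ε * t) := by
    intro t ht
    rw [← norm_map_ofReal, exp_map_ofReal]
    exact hbound t ht
  have hexpT : ∀ t : ℝ, exp (t • Aᵀ) = (exp (t • A))ᵀ := by
    intro t
    rw [← Matrix.transpose_smul, Matrix.exp_transpose]
  have hAT : ∀ t : ℝ, 0 ≤ t → ‖exp (t • Aᵀ)‖ ≤ n * (C * Real.exp (-ε * t)) := by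
    intro t ht
    rw [hexpT]
    exact le_trans (norm_transpose_le _)
      (mul_le_mul_of_nonneg_left (hA t ht) (Nat.cast_nonneg n))
  set g : ℝ → Matrix (Fin n) (Fin n) ℝ := fun t => exp (t • Aᵀ) * exp (t • A) with hg
  have hg_cont : Continuous g := by
    apply Continuous.mul
    · exact exp_continuous.comp (continuous_id.smul continuous_const)
    · exact exp_continuous.comp (continuous_id.smul continuous_const)
  have hg_norm : ∀ t : ℝ, 0 ≤ t → ‖g t‖ ≤ (n * C * C) * Real.exp (-(2 * ε) * t) := by
    intro t ht
    calc ‖g t‖ ≤ ‖exp (t • Aᵀ)‖ * ‖exp (t • A)‖ := norm_mul_le _ _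
      _ ≤ (n * (C * Real.exp (-ε * t))) * (C * Real.exp (-ε * t)) := by
          apply mul_le_mul (hAT t ht) (hA t ht) (norm_nonneg _)
          positivity
      _ = (n * C * C) * Real.exp (-(2 * ε) * t) := by
          rw [show (-(2*ε) * t) = (-ε*t) + (-ε*t) by ring, Real.exp_add]
          ring
  have hdom : IntegrableOn (fun t => (n * C * C) * Real.exp (-(2*ε) * t)) (Ioi (0:ℝ)) :=
    (exp_neg_integrableOn_Ioi 0 (by positivity)).const_mul _
  have hgi : IntegrableOn g (Ioi (0:ℝ)) := by
    apply Integrable.mono' hdom hg_cont.aestronglyMeasurable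
    filter_upwards [ae_restrict_mem measurableSet_Ioi] with t ht
    exact hg_norm t (le_of_lt ht)
  have hderiv : ∀ t : ℝ, HasDerivAt g (Aᵀ * g t + g t * A) t := by
    intro t
    have h1 : HasDerivAt (fun s : ℝ => exp (s • Aᵀ)) (Aᵀ * exp (t • Aᵀ)) t :=
      hasDerivAt_exp_smul_const' Aᵀ t
    have h2 : HasDerivAt (fun s : ℝ => exp (s • A)) (exp (t • A) * A) t :=
      hasDerivAt_exp_smul_const A t
    have := h1.mul h2
    refine this.congr_deriv ?_
    simp [hg, mul_assoc, mul_add]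
  have hLint : Integrable (fun t : ℝ => Aᵀ * g t) ((volume : Measure ℝ).restrict (Ioi 0)) := by
    have := (ContinuousLinearMap.mul ℝ (Matrix (Fin n) (Fin n) ℝ) Aᵀ).integrable_comp hgi
    simp at this; exact this
  have hRint : Integrable (fun t : ℝ => g t * A) ((volume : Measure ℝ).restrict (Ioi 0)) := by
    have := ((ContinuousLinearMap.mul ℝ (Matrix (Fin n) (Fin n) ℝ)).flip A).integrable_comp hgi
    simp at this; exact this
  have htends : Tendsto g atTop (𝓝 0) := by
    apply squeeze_zero_norm' (f := g)
    · filter_upwards [eventually_ge_atTop (0:ℝ)] with t ht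
      exact hg_norm t ht
    · have h1 : Tendsto (fun t : ℝ => (2*ε) * t) atTop atTop :=
        Tendsto.const_mul_atTop (by positivity) tendsto_id
      have h2 : Tendsto (fun t : ℝ => Real.exp (-(2*ε) * t)) atTop (𝓝 0) := by
        have := Real.tendsto_exp_neg_atTop_nhds_zero.comp h1
        refine this.congr fun t => ?_
        simp [Function.comp, neg_mul]
      have := h2.const_mul ((n : ℝ) * C * C)
      simpa using this
  have hg0 : g 0 = 1 := by
    simp [hg, zero_smul, exp_zero]
  have hFTC : ∫ t in Ioi (0:ℝ), (Aᵀ * g t + g t * A) = -(1 : Matrix (Fin n) (Fin n) ℝ) := by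
    rw [integral_Ioi_of_hasDerivAt_of_tendsto hg_cont.continuousWithinAt
      (fun t _ => hderiv t) (hLint.add hRint) htends, hg0, zero_sub]
  set Q := ∫ t in Ioi (0:ℝ), g t with hQ
  have hsplit : ∫ t in Ioi (0:ℝ), (Aᵀ * g t + g t * A) = Aᵀ * Q + Q * A := by
    rw [integral_add hLint hRint]
    congr 1
    · have := (ContinuousLinearMap.mul ℝ (Matrix (Fin n) (Fin n) ℝ) Aᵀ).integral_comp_comm hgi
      simpa using this
    · have := ((ContinuousLinearMap.mul ℝ (Matrix (Fin n) (Fin n) ℝ)).flip A).integral_comp_comm hgi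
      simpa using this
  have heq : Aᵀ * Q + Q * A = -(1 : Matrix (Fin n) (Fin n) ℝ) := by
    rw [← hsplit, hFTC]
  -- symmetry of g t
  have hgsymm : ∀ t : ℝ, (g t)ᵀ = g t := by
    intro t
    rw [hg]
    simp only [Matrix.transpose_mul]
    rw [← hexpT, hexpT, Matrix.transpose_transpose]
  have hQsymm : Q.IsSymm := by
    show Qᵀ = Q
    have h1 : Qᵀ = transposeCLM Q := rfl
    rw [h1, hQ]; refine (transposeCLM.integral_comp_comm hgi).symm.trans ?_
    apply integral_congr_ae
    filter_upwards with t
    exact hgsymm t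
  -- positive definiteness
  have hw_ne : ∀ (t : ℝ) (x : Fin n → ℝ), x ≠ 0 → exp (t • A) *ᵥ x ≠ 0 := by
    intro t x hx hcon
    have hinv : exp ((-t) • A) * exp (t • A) = 1 := by
      rw [← Matrix.exp_add_of_commute _ _ (((Commute.refl A).smul_left _).smul_right _), ← add_smul]
      norm_num
    have : x = 0 := by
      have h1 : (exp ((-t) • A) * exp (t • A)) *ᵥ x = exp ((-t) • A) *ᵥ (exp (t • A) *ᵥ x) :=
        (Matrix.mulVec_mulVec _ _ _).symm
      rw [hinv, Matrix.one_mulVec, hcon, Matrix.mulVec_zero] at h1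
      exact h1
    exact hx this
  have hquad : ∀ (x : Fin n → ℝ) (t : ℝ),
      x ⬝ᵥ (g t *ᵥ x) = (exp (t • A) *ᵥ x) ⬝ᵥ (exp (t • A) *ᵥ x) := by
    intro x t
    rw [hg]
    simp only
    rw [← Matrix.mulVec_mulVec, Matrix.dotProduct_mulVec x (exp (t • Aᵀ)), hexpT,
      Matrix.vecMul_transpose]
  have hQpos : Q.PosDef := by
    refine Matrix.posDef_iff_dotProduct_mulVec.mpr ⟨?_, ?_⟩
    · show Qᴴ = Q
      rw [Matrix.conjTranspose_eq_transpose_of_trivial]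
      exact hQsymm
    · intro x hx
      have hxq : star x ⬝ᵥ (Q *ᵥ x) = ∫ t in Ioi (0:ℝ), x ⬝ᵥ (g t *ᵥ x) := by
        rw [star_trivial]
        have h1 : x ⬝ᵥ (Q *ᵥ x) = quadCLM x Q := rfl
        rw [h1, hQ]; refine ((quadCLM x).integral_comp_comm hgi).symm.trans ?_
        rfl
      rw [hxq]
      have hpos : ∀ t : ℝ, 0 < x ⬝ᵥ (g t *ᵥ x) := by
        intro t
        rw [hquad]
        set w := exp (t • A) *ᵥ x with hw
        have hwne : w ≠ 0 := hw_ne t x hx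
        have hnonneg : 0 ≤ w ⬝ᵥ w := Finset.sum_nonneg fun i _ => mul_self_nonneg (w i)
        have hne : w ⬝ᵥ w ≠ 0 := fun hcon => hwne (dotProduct_self_eq_zero.mp hcon)
        exact lt_of_le_of_ne hnonneg (Ne.symm hne)
      have hint : IntegrableOn (fun t => x ⬝ᵥ (g t *ᵥ x)) (Ioi (0:ℝ)) := by
        have := (quadCLM x).integrable_comp hgi
        exact this
      apply (setIntegral_pos_iff_support_of_nonneg_ae ?_ hint).mpr
      · have hsupp : Function.support (fun t => x ⬝ᵥ (g t *ᵥ x)) = univ := by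
          ext t
          simp [Function.mem_support, ne_of_gt (hpos t)]
        rw [hsupp, univ_inter, Real.volume_Ioi]
        simp
      · filter_upwards with t
        exact le_of_lt (hpos t)
  refine ⟨Q, hQsymm, hQpos, ?_⟩
  rw [add_comm]
  exact heq

/-- If a real `n×n` matrix `A` is Hurwitz (every complex eigenvalue has
strictly negative real part), then there exists a symmetric positive definite real
matrix `Q` solving the Lyapunov equation `Q A + Aᵀ Q = −I`. -/
theorem lyapunov_equation_solvable_of_hurwitz
    (n : ℕ) (A : Matrix (Fin n) (Fin n) ℝ)
    (hHurwitz : ∀ μ : ℂ,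
      (∃ v : Fin n → ℂ, v ≠ 0 ∧ (A.map Complex.ofReal).mulVec v = μ • v) → μ.re < 0) :
    ∃ Q : Matrix (Fin n) (Fin n) ℝ,
      Q.IsSymm ∧ Q.PosDef ∧ Q * A + A.transpose * Q = -(1 : Matrix (Fin n) (Fin n) ℝ) :=
  lyapunov_equation_solvable_of_hurwitz' A hHurwitz
end

section
/- Define φ : ℝ → ℝ by φ(s) = −1/(4π) for s < −π/2, φ(s) = (1/(4π)) sin s for −π/2 ≤ s ≤ π/2, and φ(s) = 1/(4π) for s > π/2. Then for all real z₁, z₂, (2.75 z₁ + 0.5 z₂)·z₂ + (0.5 z₁ + 0.375 z₂)·(−2 z₁ − 4 z₂ − φ(z₁)) ≤ −0.5 (z₁² + z₂²). Equivalently, the function V(z₁,z₂) = 1.375 z₁² + 0.1875 z₂² + 0.5 z₁ z₂ satisfies the Lyapunov inequality (∂V/∂z₁) z₂ + (∂V/∂z₂) f(z₁,z₂) ≤ −W(z₁,z₂) with f(z₁,z₂) = −2 z₁ − 4 z₂ − φ(z₁) and W(z₁,z₂) = 0.5 z₁² + 0.5 z₂². -/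
/-! Expanding, `V̇ + W = -½ (z₁² + z₂²) - ½ z₁ p - ⅜ z₂ p` where `p = φ(z₁)`. The term `z₁ p` is
nonnegative, and `φ` lies in the sector `|φ(s)| ≤ |s|/(4π) ≤ |s|`, so the cross term `⅜ z₂ p` is
absorbed by completing the square: `½ z₂² + ⅜ z₂ p + (9/128) p² = ½ (z₂ + ⅜ p)²`, with
`(9/128) p² ≤ ½ z₁²`. -/

/-- The saturation function `φ`: equal to `(1/(4π)) sin s` on `[−π/2, π/2]`,
constant `−1/(4π)` on `(−∞, −π/2)` and `1/(4π)` on `(π/2, ∞)`. -/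
noncomputable def phiSat (s : ℝ) : ℝ :=
  if s < -(Real.pi / 2) then -(1 / (4 * Real.pi))
  else if s ≤ Real.pi / 2 then (1 / (4 * Real.pi)) * Real.sin s
  else 1 / (4 * Real.pi)

open Real

theorem lyapunov_inequality_of_sector {z1 z2 p : ℝ} (hsign : 0 ≤ z1 * p) (hsq : p ^ 2 ≤ z1 ^ 2) :
    (2.75 * z1 + 0.5 * z2) * z2 + (0.5 * z1 + 0.375 * z2) * (-2 * z1 - 4 * z2 - p)
      ≤ -0.5 * (z1 ^ 2 + z2 ^ 2) := by
  nlinarith [sq_nonneg (z2 + 0.375 * p)]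

theorem mul_phiSat_nonneg (s : ℝ) : 0 ≤ s * phiSat s := by
  have hc : 0 < 1 / (4 * π) := by positivity
  unfold phiSat
  split_ifs with hlow hhigh
  · nlinarith [pi_pos]
  · rw [mul_left_comm]
    refine mul_nonneg hc.le ?_
    rcases le_total 0 s with hs | hs
    · exact mul_nonneg hs (sin_nonneg_of_nonneg_of_le_pi hs (by linarith [pi_pos]))
    · exact mul_nonneg_of_nonpos_of_nonpos hs
        (sin_nonpos_of_nonpos_of_neg_pi_le hs (by linarith [pi_pos]))
  · nlinarith [pi_pos]

theorem abs_phiSat_le (s : ℝ) : |phiSat s| ≤ |s| / (4 * π) := by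
  have hc : 0 < 1 / (4 * π) := by positivity
  have saturated_bound (h : π / 2 < |s|) : 1 / (4 * π) ≤ |s| / (4 * π) :=
    div_le_div_of_nonneg_right (by linarith [pi_gt_three]) (by positivity)
  unfold phiSat
  split_ifs with hlow hhigh
  · rw [abs_neg, abs_of_pos hc]
    exact saturated_bound (by rw [abs_of_neg (by linarith [pi_pos])]; linarith)
  · rw [abs_mul, abs_of_pos hc, one_div_mul_eq_div]
    exact div_le_div_of_nonneg_right abs_sin_le_abs (by positivity)
  · rw [abs_of_pos hc]
    exact saturated_bound (by rw [abs_of_pos (by linarith [pi_pos])]; linarith)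

theorem phiSat_sq_le (s : ℝ) : phiSat s ^ 2 ≤ s ^ 2 :=
  sq_le_sq.mpr <| (abs_phiSat_le s).trans <|
    div_le_self (abs_nonneg s) (by linarith [pi_gt_three])

/-- the Lyapunov inequality
`(∂V/∂z₁) z₂ + (∂V/∂z₂) f(z₁,z₂) ≤ −W(z₁,z₂)` with
`V(z₁,z₂) = 1.375 z₁² + 0.1875 z₂² + 0.5 z₁ z₂` (so `∂V/∂z₁ = 2.75 z₁ + 0.5 z₂`,
`∂V/∂z₂ = 0.5 z₁ + 0.375 z₂`), `f(z₁,z₂) = −2 z₁ − 4 z₂ − φ(z₁)` and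
`W(z₁,z₂) = 0.5 z₁² + 0.5 z₂²`. -/
theorem lyapunov_inequality_nonlinear_td :
    ∀ z1 z2 : ℝ,
      (2.75 * z1 + 0.5 * z2) * z2
        + (0.5 * z1 + 0.375 * z2) * (-2 * z1 - 4 * z2 - phiSat z1)
        ≤ -0.5 * (z1 ^ 2 + z2 ^ 2) :=
  fun z1 _ => lyapunov_inequality_of_sector (mul_phiSat_nonneg z1) (phiSat_sq_le z1)
end
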